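/- arXiv:1303.3314 — 4 statements merged into one kernel-verified Lean document; each statement's English description precedes it below -/
import Mathlib

section
/- Let φ ∈ L^∞(𝕋) be real-valued and suppose g ∈ H² is outer and there exists c ∈ ℂ such that φ·|g|² = c·e₁ + conj(c)·e₋₁ almost everywhere on 𝕋. Let ĝ(0) = ⟨g, e₀⟩ and ĝ(1) = ⟨g, e₁⟩, and let V be the subspace of span{e₀, e₁} consisting of all vectors orthogonal to ĝ(0)·e₀ + ĝ(1)·e₁. Then g ∈ H²_V and T_φ^V g = 0. -/
noncomputable section

open MeasureTheory Complex
open scoped ComplexConjugate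

namespace NeilToeplitz

instance fact_two_pi_pos : Fact (0 < 2 * Real.pi) := ⟨by positivity⟩

/-- The circle group `ℝ / 2πℤ`. -/
abbrev 𝕋 : Type := AddCircle (2 * Real.pi)

/-- Normalized arclength (Haar probability) measure on the circle. -/
abbrev μ : Measure 𝕋 := AddCircle.haarAddCircle

/-- The Lebesgue space `L²(𝕋)`. -/
abbrev L2 : Type := Lp ℂ 2 μ

/-- The exponential `e_n(e^{it}) = e^{int}` as an element of `L²(𝕋)`. -/
def e (n : ℤ) : L2 := fourierLp 2 n

/-- The Hardy space `H²`, the closed linear span of `{e_n : n ≥ 0}` in `L²(𝕋)`. -/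
def H2 : Submodule ℂ L2 :=
  (Submodule.span ℂ (Set.range fun n : ℕ => e (n : ℤ))).topologicalClosure

/-- The space `H²_V = H² ∩ V^⊥`. -/
def H2V (V : Submodule ℂ L2) : Submodule ℂ L2 := H2 ⊓ Vᗮ

lemma isClosed_H2V (V : Submodule ℂ L2) : IsClosed ((H2V V : Set L2)) := by
  have h1 : IsClosed ((H2 : Set L2)) := Submodule.isClosed_topologicalClosure _
  have h2 : IsClosed ((Vᗮ : Set L2)) := Submodule.isClosed_orthogonal V
  simpa [H2V] using h1.inter h2

instance (V : Submodule ℂ L2) : CompleteSpace (H2V V) :=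
  (isClosed_H2V V).completeSpace_coe

/-- A bounded (a.e.) measurable function times an `L²` function is in `L²`. -/
lemma memLp_bdd_mul {φ : 𝕋 → ℂ} (hφ : AEStronglyMeasurable φ μ) (C : ℝ)
    (hC : ∀ᵐ x ∂μ, ‖φ x‖ ≤ C) (g : L2) :
    MemLp (fun x => φ x * g x) 2 μ := by
  refine MemLp.of_le_mul (c := C) (Lp.memLp g) (hφ.mul (Lp.aestronglyMeasurable g)) ?_
  filter_upwards [hC] with x hx
  rw [norm_mul]
  exact mul_le_mul_of_nonneg_right hx (norm_nonneg _)

/-- Multiplication of `g ∈ L²` by a real-valued bounded measurable symbol `φ`. -/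
def phiMul (φ : 𝕋 → ℝ) (hφ : Measurable φ) {C : ℝ} (hC : ∀ x, |φ x| ≤ C) (g : L2) : L2 :=
  (memLp_bdd_mul ((Complex.measurable_ofReal.comp hφ).aestronglyMeasurable) C
    (Filter.Eventually.of_forall fun x => by simpa using hC x) g).toLp _

/-- The Toeplitz operator `T_φ^V : H²_V → H²_V`, `g ↦ P_V (φ · g)`. -/
def toeplitz (φ : 𝕋 → ℝ) (hφ : Measurable φ) {C : ℝ} (hC : ∀ x, |φ x| ≤ C)
    (V : Submodule ℂ L2) (g : H2V V) : H2V V :=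
  (H2V V).orthogonalProjectionOnto (phiMul φ hφ hC (g : L2))

/-- Multiplication of `g ∈ L²` by the exponential `e_n`. -/
def mulFourier (n : ℤ) (g : L2) : L2 :=
  (memLp_bdd_mul (map_continuous (fourier n)).aestronglyMeasurable 1
    (Filter.Eventually.of_forall fun x => le_of_eq (Circle.norm_coe _)) g).toLp _

/-- `g` is outer: the analytic-polynomial multiples of `g` are dense in `H²`. -/
def Outer (g : L2) : Prop :=
  (Submodule.span ℂ (Set.range fun n : ℕ => mulFourier (n : ℤ) g)).topologicalClosure = H2

/-- `lam` is an eigenvalue of `φ` relative to the Neil algebra. -/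
def IsEigenvalueRelNeil (φ : 𝕋 → ℝ) (hφ : Measurable φ) {C : ℝ} (hC : ∀ x, |φ x| ≤ C)
    (lam : ℝ) : Prop :=
  ∃ V : Submodule ℂ L2, V ≤ Submodule.span ℂ {e 0, e 1} ∧
    ∃ g : H2V V, g ≠ 0 ∧ toeplitz φ hφ hC V g = (lam : ℂ) • g

end NeilToeplitz

/-!
Write `ĝ(n) = ⟪e n, g⟫`. As `φ|g|² = c e₁ + c̄ e₋₁`, the pairing `⟪φ g, e_n g⟫ = ∫ e_n φ |g|²`
is `c̄` for `n = 1` and `0` for every other `n ≥ 0`; together with `⟪e m, e_n g⟫ = ĝ(m - n)` this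
shows that the continuous functional `h ↦ ĝ(0)² ⟪φ g, h⟫ - c̄ (ĝ(0) ĥ(1) - ĝ(1) ĥ(0))` kills
every `e_n g`, hence all of `H²` since `g` is outer. On `V^⊥` the bracket vanishes because
`conj ĝ(1) e₀ - conj ĝ(0) e₁ ∈ V`, and `ĝ(0) ≠ 0` for outer `g`, so `φ g ⊥ H²_V`. Finally `g ⊥ V`
because `ĝ(0) e₀ + ĝ(1) e₁` is the orthogonal projection of `g` onto `span {e₀, e₁}`.
-/

namespace NeilToeplitz

lemma inner_e_e (m n : ℤ) : (inner ℂ (e m) (e n) : ℂ) = if m = n then 1 else 0 :=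
  orthonormal_iff_ite.mp orthonormal_fourier m n

lemma coeFn_e (n : ℤ) : ⇑(e n) =ᵐ[μ] fourier n :=
  coeFn_fourierLp 2 n

lemma inner_L2_eq_integral {α : Type*} [MeasurableSpace α] {ν : Measure α} (f g : Lp ℂ 2 ν) :
    (inner ℂ f g : ℂ) = ∫ x, conj (f x) * g x ∂ν := by
  simp [L2.inner_def, mul_comm]

lemma topologicalClosure_span_range_le_ker {𝕜 ι E F : Type*} [NormedField 𝕜]
    [NormedAddCommGroup E] [NormedSpace 𝕜 E] [NormedAddCommGroup F] [NormedSpace 𝕜 F]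
    {v : ι → E} (Φ : E →L[𝕜] F) (h : ∀ i, Φ (v i) = 0) :
    (Submodule.span 𝕜 (Set.range v)).topologicalClosure ≤ LinearMap.ker (Φ : E →ₗ[𝕜] F) :=
  Submodule.topologicalClosure_minimal _ (Submodule.span_le.mpr (Set.range_subset_iff.mpr h))
    Φ.isClosed_ker

lemma Outer.map_eq_zero_of_mem_H2 {g : L2} (hout : Outer g) (Φ : L2 →L[ℂ] ℂ)
    (hΦ : ∀ n : ℕ, Φ (mulFourier n g) = 0) {h : L2} (hh : h ∈ H2) : Φ h = 0 :=
  topologicalClosure_span_range_le_ker Φ hΦ (hout.symm ▸ hh)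

lemma inner_e_eq_zero_of_mem_H2 {g : L2} (hg : g ∈ H2) {m : ℤ} (hm : m < 0) :
    (inner ℂ (e m) g : ℂ) = 0 :=
  topologicalClosure_span_range_le_ker (innerSL ℂ (e m))
    (fun n => by rw [innerSL_apply_apply, inner_e_e, if_neg (by omega)]) hg

lemma coeFn_mulFourier (n : ℤ) (g : L2) :
    ⇑(mulFourier n g) =ᵐ[μ] fun x => fourier n x * g x :=
  MemLp.coeFn_toLp _

lemma coeFn_phiMul (φ : 𝕋 → ℝ) (hφ : Measurable φ) {C : ℝ} (hC : ∀ x, |φ x| ≤ C) (g : L2) :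
    ⇑(phiMul φ hφ hC g) =ᵐ[μ] fun x => (φ x : ℂ) * g x :=
  MemLp.coeFn_toLp _

lemma inner_e_mulFourier (m n : ℤ) (g : L2) :
    (inner ℂ (e m) (mulFourier n g) : ℂ) = inner ℂ (e (m - n)) g := by
  rw [inner_L2_eq_integral, inner_L2_eq_integral]
  refine integral_congr_ae ?_
  filter_upwards [coeFn_e m, coeFn_e (m - n), coeFn_mulFourier n g] with x hm hmn hng
  rw [hm, hmn, hng, sub_eq_add_neg, fourier_add, fourier_neg, map_mul, conj_conj]
  ring

lemma inner_e_mulFourier_of_mem_H2 {g : L2} (hg : g ∈ H2) (m n : ℤ) :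
    (inner ℂ (e m) (mulFourier n g) : ℂ) = if n ≤ m then inner ℂ (e (m - n)) g else 0 := by
  rw [inner_e_mulFourier]
  split_ifs with hnm
  · rfl
  · exact inner_e_eq_zero_of_mem_H2 hg (by omega)

lemma Outer.inner_e_zero_ne_zero {g : L2} (hout : Outer g) (hg : g ∈ H2) :
    (inner ℂ (e 0) g : ℂ) ≠ 0 := by
  intro hg0
  have hkill : ∀ n : ℕ, innerSL ℂ (e 0) (mulFourier n g) = 0 := by
    intro n
    rw [innerSL_apply_apply, inner_e_mulFourier_of_mem_H2 hg]
    split_ifs with hn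
    · obtain rfl : n = 0 := by omega
      simpa using hg0
    · rfl
  have he0 : e (0 : ℕ) ∈ H2 := Submodule.le_topologicalClosure _ (Submodule.subset_span ⟨0, rfl⟩)
  simpa only [innerSL_apply_apply, Nat.cast_zero, inner_e_e, if_pos, one_ne_zero] using
    hout.map_eq_zero_of_mem_H2 _ hkill he0

lemma inner_phiMul_mulFourier (φ : 𝕋 → ℝ) (hφ : Measurable φ) {C : ℝ} (hC : ∀ x, |φ x| ≤ C)
    {g : L2} (c : ℂ)
    (heq : ∀ᵐ x ∂μ, (φ x : ℂ) * (‖(g : 𝕋 → ℂ) x‖ : ℂ) ^ 2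
      = c * fourier 1 x + conj c * fourier (-1) x) (n : ℕ) :
    (inner ℂ (phiMul φ hφ hC g) (mulFourier n g) : ℂ) = if n = 1 then conj c else 0 := by
  have hsymbol : (inner ℂ (phiMul φ hφ hC g) (mulFourier n g) : ℂ)
      = inner ℂ (e (-n)) (c • e 1 + conj c • e (-1)) := by
    rw [inner_L2_eq_integral, inner_L2_eq_integral]
    refine integral_congr_ae ?_
    filter_upwards [coeFn_phiMul φ hφ hC g, coeFn_mulFourier n g, heq,
      coeFn_e (-n), coeFn_e 1, coeFn_e (-1),
      Lp.coeFn_add (c • e 1) (conj c • e (-1)), Lp.coeFn_smul c (e 1),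
      Lp.coeFn_smul (conj c) (e (-1))] with x hφg hng hx hn h1 hm1 hadd hs1 hsm1
    rw [hφg, hng, hadd, Pi.add_apply, hs1, hsm1, Pi.smul_apply, Pi.smul_apply, hn, h1, hm1,
      smul_eq_mul, smul_eq_mul, ← hx, fourier_neg, conj_conj, map_mul, conj_ofReal,
      ← mul_conj']
    ring
  rw [hsymbol, inner_add_right, inner_smul_right, inner_smul_right, inner_e_e, inner_e_e]
  split_ifs <;> first | omega | ring

lemma inner_phiMul_of_mem_H2 (φ : 𝕋 → ℝ) (hφ : Measurable φ) {C : ℝ} (hC : ∀ x, |φ x| ≤ C)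
    {g : L2} (hg : g ∈ H2) (hout : Outer g) (c : ℂ)
    (heq : ∀ᵐ x ∂μ, (φ x : ℂ) * (‖(g : 𝕋 → ℂ) x‖ : ℂ) ^ 2
      = c * fourier 1 x + conj c * fourier (-1) x) {h : L2} (hh : h ∈ H2) :
    (inner ℂ (e 0) g : ℂ) ^ 2 * inner ℂ (phiMul φ hφ hC g) h
      = conj c * (inner ℂ (e 0) g * inner ℂ (e 1) h - inner ℂ (e 1) g * inner ℂ (e 0) h) := by
  set g0 : ℂ := inner ℂ (e 0) g
  set g1 : ℂ := inner ℂ (e 1) g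
  let Φ : L2 →L[ℂ] ℂ := g0 ^ 2 • innerSL ℂ (phiMul φ hφ hC g)
    - conj c • (g0 • innerSL ℂ (e 1) - g1 • innerSL ℂ (e 0))
  have hΦ_apply : ∀ v, Φ v
      = g0 ^ 2 * inner ℂ (phiMul φ hφ hC g) v
        - conj c * (g0 * inner ℂ (e 1) v - g1 * inner ℂ (e 0) v) := fun v => rfl
  have hΦ : ∀ n : ℕ, Φ (mulFourier n g) = 0 := by
    intro n
    rw [hΦ_apply, inner_phiMul_mulFourier φ hφ hC c heq n, inner_e_mulFourier_of_mem_H2 hg,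
      inner_e_mulFourier_of_mem_H2 hg]
    obtain rfl | rfl | hn : n = 0 ∨ n = 1 ∨ 2 ≤ n := by omega
    · simp only [Nat.cast_zero, Int.reduceLE, zero_ne_one, ↓reduceIte, sub_zero]
      ring
    · simp only [Nat.cast_one, Int.reduceLE, ↓reduceIte, sub_self]
      ring
    · simp [show n ≠ 0 by omega, show n ≠ 1 by omega, show ¬ (n : ℤ) ≤ 1 by omega]
  have hΦh := hout.map_eq_zero_of_mem_H2 Φ hΦ hh
  rw [hΦ_apply] at hΦh
  linear_combination hΦh

def neilSubspace (g : L2) : Submodule ℂ L2 :=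
  Submodule.span ℂ {e 0, e 1} ⊓
    (Submodule.span ℂ {(inner ℂ (e 0) g : ℂ) • e 0 + (inner ℂ (e 1) g : ℂ) • e 1})ᗮ

lemma inner_eq_inner_of_mem_span_e_zero_e_one {v : L2} (hv : v ∈ Submodule.span ℂ {e 0, e 1})
    (g : L2) : (inner ℂ v g : ℂ)
      = inner ℂ v ((inner ℂ (e 0) g : ℂ) • e 0 + (inner ℂ (e 1) g : ℂ) • e 1) := by
  obtain ⟨a, b, rfl⟩ := Submodule.mem_span_pair.mp hv
  simp only [inner_add_left, inner_add_right, inner_smul_left, inner_smul_right, inner_e_e,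
    ↓reduceIte, mul_one, one_ne_zero, mul_zero, add_zero, zero_ne_one, zero_add]
  ring

lemma mem_orthogonal_neilSubspace (g : L2) : g ∈ (neilSubspace g)ᗮ := by
  rw [Submodule.mem_orthogonal]
  rintro v ⟨hv, hvw⟩
  rw [inner_eq_inner_of_mem_span_e_zero_e_one hv, ← inner_conj_symm,
    Submodule.mem_orthogonal_singleton_iff_inner_right.mp hvw, map_zero]

lemma inner_mul_inner_eq_of_mem_orthogonal_neilSubspace {g h : L2}
    (hh : h ∈ (neilSubspace g)ᗮ) :
    (inner ℂ (e 1) g : ℂ) * inner ℂ (e 0) h = inner ℂ (e 0) g * inner ℂ (e 1) h := by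
  have hv : conj (inner ℂ (e 1) g) • e 0 - conj (inner ℂ (e 0) g) • e 1 ∈ neilSubspace g := by
    refine Submodule.mem_inf.mpr ⟨Submodule.sub_mem _
      (Submodule.smul_mem _ _ (Submodule.subset_span (by simp)))
      (Submodule.smul_mem _ _ (Submodule.subset_span (by simp))), ?_⟩
    rw [Submodule.mem_orthogonal_singleton_iff_inner_right]
    simp only [inner_add_left, inner_sub_right, inner_smul_left, inner_smul_right, inner_e_e,
      inner_conj_symm, ↓reduceIte, mul_one, one_ne_zero, mul_zero, add_zero, zero_ne_one, zero_add]
    ring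
  have hvh := (Submodule.mem_orthogonal _ h).mp hh _ hv
  simp only [inner_sub_left, inner_smul_left, conj_conj] at hvh
  linear_combination hvh

/-- if `g ∈ H²` is outer and `φ·|g|² = c·e₁ + conj(c)·e₋₁` a.e., then with
`V ⊆ span{e₀,e₁}` the subspace of vectors orthogonal to `ĝ(0)·e₀ + ĝ(1)·e₁`, one has
`g ∈ H²_V` and `T_φ^V g = 0`. -/
theorem toeplitz_kernel_of_outer (φ : 𝕋 → ℝ) (hφ : Measurable φ) {C : ℝ} (hC : ∀ x, |φ x| ≤ C)
    (g : L2) (hgH2 : g ∈ H2) (hout : Outer g) (c : ℂ)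
    (heq : ∀ᵐ x ∂μ, (φ x : ℂ) * (‖(g : 𝕋 → ℂ) x‖ : ℂ) ^ 2
      = c * fourier 1 x + conj c * fourier (-1) x)
    (V : Submodule ℂ L2)
    (hVdef : V = Submodule.span ℂ {e 0, e 1} ⊓
      (Submodule.span ℂ {(inner ℂ (e 0) g : ℂ) • e 0 + (inner ℂ (e 1) g : ℂ) • e 1})ᗮ) :
    ∃ hgV : g ∈ H2V V, toeplitz φ hφ hC V ⟨g, hgV⟩ = 0 := by
  change V = neilSubspace g at hVdef
  subst hVdef
  refine ⟨⟨hgH2, mem_orthogonal_neilSubspace g⟩,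
    Submodule.orthogonalProjectionOnto_apply_of_mem_orthogonal ?_⟩
  rw [Submodule.mem_orthogonal]
  rintro h ⟨hhH2, hhV⟩
  have hφg : (inner ℂ (e 0) g : ℂ) ^ 2 * inner ℂ (phiMul φ hφ hC g) h = 0 := by
    rw [inner_phiMul_of_mem_H2 φ hφ hC hgH2 hout c heq hhH2,
      inner_mul_inner_eq_of_mem_orthogonal_neilSubspace hhV, sub_self, mul_zero]
  rw [← inner_conj_symm, (mul_eq_zero.mp hφg).resolve_left
    (pow_ne_zero 2 (hout.inner_e_zero_ne_zero hgH2)), map_zero]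

end NeilToeplitz
end
end

section
/- Let A be a unital complex algebra, H and K complex Hilbert spaces, ν : A → B(H) and ρ : A → B(K) unital algebra homomorphisms into the bounded operators, and V : H → K a linear isometry such that ν(a) = V* ρ(a) V for all a ∈ A. Then V(H) is semi-invariant for ρ: there exist closed subspaces M ⊆ N of K, each invariant under ρ(a) for every a ∈ A, such that V(H) = N ∩ M^⊥. -/
/-!
Let `L = V(H)` and let `N` be the smallest closed `ρ`-invariant subspace containing `L`. Since
`V* ρ(b) ρ(a) V = ν(ba) = ν(b) V* ρ(a) V`, the intertwining relation `V* ρ(b) = ν(b) V*` holds on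
`N`. Hence `M = N ⊓ Lᗮ = N ⊓ ker V*` is again invariant, and `L = N ⊓ Mᗮ` because `N` is the
orthogonal sum of the closed subspace `L` and `M`.
-/

open ContinuousLinearMap

namespace Submodule

variable {𝕜 E : Type*} [RCLike 𝕜] [NormedAddCommGroup E] [InnerProductSpace 𝕜 E]

theorem inf_orthogonal_inf_orthogonal_of_le {K₁ K₂ : Submodule 𝕜 E} [K₁.HasOrthogonalProjection]
    (h : K₁ ≤ K₂) : K₂ ⊓ (K₂ ⊓ K₁ᗮ)ᗮ = K₁ := by
  have hK₁ : K₁ ≤ (K₁ᗮ ⊓ K₂)ᗮ :=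
    K₁.le_orthogonal_orthogonal.trans (orthogonal_le inf_le_left)
  calc K₂ ⊓ (K₂ ⊓ K₁ᗮ)ᗮ = (K₁ ⊔ K₁ᗮ ⊓ K₂) ⊓ (K₁ᗮ ⊓ K₂)ᗮ := by
        rw [sup_orthogonal_inf_of_hasOrthogonalProjection h, inf_comm K₁ᗮ]
    _ = K₁ ⊔ K₁ᗮ ⊓ K₂ ⊓ (K₁ᗮ ⊓ K₂)ᗮ := sup_inf_assoc_of_le _ hK₁
    _ = K₁ := by rw [inf_orthogonal_eq_bot, sup_bot_eq]

end Submodule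

section InvariantClosure

variable {𝕜 A K : Type*} [RCLike 𝕜] [Ring A] [Algebra 𝕜 A]
  [NormedAddCommGroup K] [InnerProductSpace 𝕜 K]

def invariantClosure (ρ : A →ₐ[𝕜] (K →L[𝕜] K)) (L : Submodule 𝕜 K) : Submodule 𝕜 K :=
  (⨆ a, L.map (ρ a : K →ₗ[𝕜] K)).topologicalClosure

variable (ρ : A →ₐ[𝕜] (K →L[𝕜] K)) (L : Submodule 𝕜 K)

theorem isClosed_invariantClosure : IsClosed (invariantClosure ρ L : Set K) :=
  Submodule.isClosed_topologicalClosure _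

theorem apply_mem_invariantClosure (a : A) {x : K} (hx : x ∈ L) :
    ρ a x ∈ invariantClosure ρ L :=
  Submodule.le_topologicalClosure _ <|
    Submodule.mem_iSup_of_mem a (Submodule.mem_map_of_mem hx)

theorem le_invariantClosure : L ≤ invariantClosure ρ L := fun x hx => by
  simpa using apply_mem_invariantClosure ρ L 1 hx

theorem invariantClosure_le {S : Submodule 𝕜 K} (hS : IsClosed (S : Set K))
    (h : ∀ a, ∀ x ∈ L, ρ a x ∈ S) : invariantClosure ρ L ≤ S :=
  Submodule.topologicalClosure_minimal _
    (iSup_le fun a => Submodule.map_le_iff_le_comap.mpr fun x hx => h a x hx) hS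

theorem mapsTo_invariantClosure (b : A) :
    Set.MapsTo (ρ b) (invariantClosure ρ L) (invariantClosure ρ L) := fun x hx => by
  have hclosed : IsClosed ((invariantClosure ρ L).comap (ρ b : K →ₗ[𝕜] K) : Set K) :=
    (isClosed_invariantClosure ρ L).preimage (ρ b).continuous
  refine invariantClosure_le ρ L hclosed (fun a y hy => ?_) hx
  simpa using apply_mem_invariantClosure ρ L (b * a) hy

end InvariantClosure

section Dilation

variable {𝕜 A H K : Type*} [RCLike 𝕜] [Ring A] [Algebra 𝕜 A]
  [NormedAddCommGroup H] [InnerProductSpace 𝕜 H] [CompleteSpace H]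
  [NormedAddCommGroup K] [InnerProductSpace 𝕜 K] [CompleteSpace K]
  {ν : A →ₐ[𝕜] (H →L[𝕜] H)} {ρ : A →ₐ[𝕜] (K →L[𝕜] K)} {T : H →L[𝕜] K}

theorem adjoint_apply_eq_of_mem_invariantClosure
    (hdil : ∀ a, ν a = (adjoint T).comp ((ρ a).comp T)) (b : A) {y : K}
    (hy : y ∈ invariantClosure ρ T.range) :
    adjoint T (ρ b y) = ν b (adjoint T y) := by
  suffices invariantClosure ρ T.range ≤ (adjoint T ∘L ρ b - ν b ∘L adjoint T).ker from
    sub_eq_zero.mp (this hy)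
  refine invariantClosure_le ρ _ (ContinuousLinearMap.isClosed_ker _) ?_
  rintro a _ ⟨h, rfl⟩
  have hcomp : adjoint T (ρ b (ρ a (T h))) = ν b (adjoint T (ρ a (T h))) :=
    calc adjoint T (ρ b (ρ a (T h))) = ν (b * a) h := by rw [hdil, map_mul]; rfl
      _ = ν b (adjoint T (ρ a (T h))) := by rw [map_mul, hdil a]; rfl
  simpa [sub_eq_zero] using hcomp

theorem mapsTo_invariantClosure_inf_orthogonal
    (hdil : ∀ a, ν a = (adjoint T).comp ((ρ a).comp T)) (b : A) :
    Set.MapsTo (ρ b) (invariantClosure ρ T.range ⊓ T.rangeᗮ : Submodule 𝕜 K)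
      (invariantClosure ρ T.range ⊓ T.rangeᗮ : Submodule 𝕜 K) := fun x hx => by
  obtain ⟨hxN, hxL⟩ := hx
  rw [orthogonal_range] at hxL ⊢
  refine ⟨mapsTo_invariantClosure ρ _ b hxN, ?_⟩
  have hTx : adjoint T x = 0 := hxL
  change adjoint T (ρ b x) = 0
  rw [adjoint_apply_eq_of_mem_invariantClosure hdil b hxN, hTx, map_zero]

end Dilation

/-- Sarason's Lemma: if `ν(a) = V* ρ(a) V` for all `a`, with `V` an isometry,
then `V(H)` is a semi-invariant subspace for `ρ`. -/
theorem range_semiInvariant_of_dilation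
    {A : Type*} [Ring A] [Algebra ℂ A]
    {H K : Type*} [NormedAddCommGroup H] [InnerProductSpace ℂ H] [CompleteSpace H]
    [NormedAddCommGroup K] [InnerProductSpace ℂ K] [CompleteSpace K]
    (ν : A →ₐ[ℂ] (H →L[ℂ] H)) (ρ : A →ₐ[ℂ] (K →L[ℂ] K))
    (V : H →ₗᵢ[ℂ] K)
    (hdil : ∀ a : A, ν a = (ContinuousLinearMap.adjoint V.toContinuousLinearMap).comp
        ((ρ a).comp V.toContinuousLinearMap)) :
    ∃ M N : Submodule ℂ K, IsClosed (M : Set K) ∧ IsClosed (N : Set K) ∧ M ≤ N ∧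
      (∀ a : A, ∀ x ∈ M, ρ a x ∈ M) ∧ (∀ a : A, ∀ x ∈ N, ρ a x ∈ N) ∧
      LinearMap.range V.toLinearMap = N ⊓ Mᗮ := by
  set L := V.toContinuousLinearMap.range
  set N := invariantClosure ρ L
  have : CompleteSpace L := V.isometry.isUniformInducing.isComplete_range.completeSpace_coe
  refine ⟨N ⊓ Lᗮ, N, (isClosed_invariantClosure ρ L).inter L.isClosed_orthogonal,
    isClosed_invariantClosure ρ L, inf_le_left,
    mapsTo_invariantClosure_inf_orthogonal hdil, mapsTo_invariantClosure ρ L,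
    (Submodule.inf_orthogonal_inf_orthogonal_of_le (le_invariantClosure ρ L)).symm⟩
end

section
/- Let K be a complex Hilbert space, T : K → K a contraction (‖T‖ ≤ 1), and H a closed subspace of K that is semi-invariant for T, i.e. there exist closed T-invariant subspaces M ⊆ N of K with H = N ∩ M^⊥. If the compression S := P_H T|_H is an isometry on H (‖P_H(T h)‖ = ‖h‖ for all h ∈ H, where P_H is the orthogonal projection of K onto H), then H is invariant for T: T(H) ⊆ H. -/
/-!
For `h ∈ H`, `‖h‖ = ‖P_H (T h)‖ ≤ ‖T h‖ ≤ ‖h‖`, so `‖P_H (T h)‖ = ‖T h‖` and by Pythagoras the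
component of `T h` orthogonal to `H` vanishes.
-/

theorem Submodule.mem_of_norm_le_norm_orthogonalProjectionOnto {𝕜 E : Type*} [RCLike 𝕜]
    [NormedAddCommGroup E] [InnerProductSpace 𝕜 E] (U : Submodule 𝕜 E)
    [U.HasOrthogonalProjection] {v : E} (hv : ‖v‖ ≤ ‖(U.orthogonalProjectionOnto v : E)‖) :
    v ∈ U :=
  (U.mem_iff_norm_starProjection v).2 (le_antisymm (U.norm_starProjection_apply_le v) hv)

theorem invariant_of_isometric_compression_general
    {K : Type*} [NormedAddCommGroup K] [InnerProductSpace ℂ K]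
    (T : K →L[ℂ] K) (hT : ‖T‖ ≤ 1)
    (H : Submodule ℂ K) [CompleteSpace H]
    (hiso : ∀ h ∈ H, ‖(H.orthogonalProjectionOnto (T h) : K)‖ = ‖h‖) :
    ∀ h ∈ H, T h ∈ H := by
  intro h hh
  refine H.mem_of_norm_le_norm_orthogonalProjectionOnto ?_
  calc ‖T h‖ ≤ 1 * ‖h‖ := T.le_of_opNorm_le hT h
    _ = ‖(H.orthogonalProjectionOnto (T h) : K)‖ := by rw [one_mul, hiso h hh]

/-- if `H` is a semi-invariant subspace for a contraction `T` and the compression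
`S = P_H T|_H` is an isometry, then `H` is invariant for `T`. -/
theorem invariant_of_isometric_compression
    {K : Type*} [NormedAddCommGroup K] [InnerProductSpace ℂ K] [CompleteSpace K]
    (T : K →L[ℂ] K) (hT : ‖T‖ ≤ 1)
    (M N : Submodule ℂ K) (hMc : IsClosed (M : Set K)) (hNc : IsClosed (N : Set K))
    (hMN : M ≤ N) (hMinv : ∀ x ∈ M, T x ∈ M) (hNinv : ∀ x ∈ N, T x ∈ N)
    (H : Submodule ℂ K) [CompleteSpace H] (hH : H = N ⊓ Mᗮ)
    (hiso : ∀ h ∈ H, ‖(H.orthogonalProjectionOnto (T h) : K)‖ = ‖h‖) :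
    ∀ h ∈ H, T h ∈ H :=
  invariant_of_isometric_compression_general T hT H hiso
end

section
/- Let A be a unital complex normed algebra, H a complex Hilbert space, and ν : A → B(H) a unital contractive algebra homomorphism (‖ν(a)‖ ≤ ‖a‖ for all a ∈ A). Suppose {a_i}_{i∈J} ⊆ A is a set of elements with ‖a_i‖ = 1 for all i that generates a dense subalgebra of A, and suppose ν(a_i) is an isometry for every i ∈ J. Then ν is extremal: for every complex Hilbert space K, every unital contractive algebra homomorphism ρ : A → B(K), and every linear isometry V : H → K satisfying ν(a) = V* ρ(a) V for all a ∈ A, one has V ν(a) = ρ(a) V for all a ∈ A. -/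
/-!
For a generator `g` with `ν g` isometric, the compression identity `ν g = V† ρ(g) V` forces
`y := ρ(g) V x` to satisfy `‖y‖ ≤ ‖x‖ = ‖V† y‖`; since `V V†` is the orthogonal projection onto the
range of `V`, Pythagoras gives `y = V V† y = V ν(g) x`. The set of `a` with `V ν(a) = ρ(a) V` is a
subalgebra, closed because contractive representations are continuous, so it contains the closure
of the algebra generated by the `gen i`, which is all of `A`.
-/

open ContinuousLinearMap

namespace LinearIsometry

variable {𝕜 E F : Type*} [RCLike 𝕜]
  [NormedAddCommGroup E] [InnerProductSpace 𝕜 E] [CompleteSpace E]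
  [NormedAddCommGroup F] [InnerProductSpace 𝕜 F] [CompleteSpace F]

theorem norm_sub_apply_adjoint_apply_sq (V : E →ₗᵢ[𝕜] F) (y : F) :
    ‖y - V (adjoint V.toContinuousLinearMap y)‖ ^ 2 =
      ‖y‖ ^ 2 - ‖adjoint V.toContinuousLinearMap y‖ ^ 2 := by
  set z := adjoint V.toContinuousLinearMap y
  have hinner : RCLike.re (inner 𝕜 y (V z)) = ‖z‖ ^ 2 := by
    rw [← V.coe_toContinuousLinearMap, ← adjoint_inner_left, inner_self_eq_norm_sq]
  rw [norm_sub_sq (𝕜 := 𝕜), hinner, V.norm_map]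
  ring

theorem apply_adjoint_apply_eq_of_norm_le (V : E →ₗᵢ[𝕜] F) {y : F}
    (h : ‖y‖ ≤ ‖adjoint V.toContinuousLinearMap y‖) :
    V (adjoint V.toContinuousLinearMap y) = y := by
  have hsq : ‖y - V (adjoint V.toContinuousLinearMap y)‖ ^ 2 ≤ 0 := by
    rw [norm_sub_apply_adjoint_apply_sq, sub_nonpos]
    gcongr
  rw [eq_comm, ← sub_eq_zero, ← norm_eq_zero]
  exact pow_eq_zero_iff two_ne_zero |>.mp (le_antisymm hsq (sq_nonneg _))

theorem comp_eq_comp_of_isometric_compression (V : E →ₗᵢ[𝕜] F) {S : E →L[𝕜] E} {T : F →L[𝕜] F}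
    (hcomp : S = adjoint V.toContinuousLinearMap ∘L (T ∘L V.toContinuousLinearMap))
    (hS : ∀ x, ‖S x‖ = ‖x‖) (hT : ‖T‖ ≤ 1) :
    V.toContinuousLinearMap ∘L S = T ∘L V.toContinuousLinearMap := by
  ext x
  have hSx : S x = adjoint V.toContinuousLinearMap (T (V x)) := by rw [hcomp]; rfl
  have hle : ‖T (V x)‖ ≤ ‖adjoint V.toContinuousLinearMap (T (V x))‖ :=
    calc ‖T (V x)‖ ≤ ‖T‖ * ‖V x‖ := T.le_opNorm _
      _ ≤ ‖x‖ := by rw [V.norm_map]; exact mul_le_of_le_one_left (norm_nonneg x) hT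
      _ = _ := by rw [← hSx, hS]
  simp only [comp_apply, coe_toContinuousLinearMap, hSx]
  exact V.apply_adjoint_apply_eq_of_norm_le hle

end LinearIsometry

section Intertwining

variable {𝕜 A E F : Type*} [NontriviallyNormedField 𝕜] [Ring A] [Algebra 𝕜 A]
  [NormedAddCommGroup E] [NormedSpace 𝕜 E] [NormedAddCommGroup F] [NormedSpace 𝕜 F]

def intertwiningSubalgebra (ν : A →ₐ[𝕜] (E →L[𝕜] E)) (ρ : A →ₐ[𝕜] (F →L[𝕜] F))
    (V : E →L[𝕜] F) : Subalgebra 𝕜 A where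
  carrier := {a | V ∘L ν a = ρ a ∘L V}
  mul_mem' {a b} ha hb := by
    simp only [Set.mem_ofPred_eq, map_mul, mul_def] at ha hb ⊢
    rw [← comp_assoc, ha, comp_assoc, hb, comp_assoc]
  add_mem' {a b} ha hb := by
    simp only [Set.mem_ofPred_eq, map_add, comp_add, add_comp] at ha hb ⊢
    rw [ha, hb]
  algebraMap_mem' c := by
    ext x
    simp [Algebra.algebraMap_eq_smul_one]

theorem isClosed_intertwiningSubalgebra [TopologicalSpace A] {ν : A →ₐ[𝕜] (E →L[𝕜] E)}
    {ρ : A →ₐ[𝕜] (F →L[𝕜] F)} (hν : Continuous ν) (hρ : Continuous ρ) (V : E →L[𝕜] F) :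
    IsClosed (intertwiningSubalgebra ν ρ V : Set A) :=
  isClosed_eq (continuous_const.clm_comp hν) (hρ.clm_comp continuous_const)

theorem intertwiningSubalgebra_eq_top [TopologicalSpace A] {ν : A →ₐ[𝕜] (E →L[𝕜] E)}
    {ρ : A →ₐ[𝕜] (F →L[𝕜] F)} (hν : Continuous ν) (hρ : Continuous ρ) {V : E →L[𝕜] F}
    {s : Set A} (hdense : Dense (Algebra.adjoin 𝕜 s : Set A))
    (hs : s ⊆ intertwiningSubalgebra ν ρ V) : intertwiningSubalgebra ν ρ V = ⊤ := by
  rw [eq_top_iff, ← SetLike.coe_subset_coe, Algebra.coe_top, ← hdense.closure_eq]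
  exact closure_minimal (Algebra.adjoin_le hs) (isClosed_intertwiningSubalgebra hν hρ V)

end Intertwining

/-- a unital contractive representation of a unital complex normed algebra that
sends a norm-one generating set (generating a dense subalgebra) to isometries is extremal. -/
theorem extremal_of_isometric_generators
    {A : Type*} [NormedRing A] [NormedAlgebra ℂ A]
    {H : Type*} [NormedAddCommGroup H] [InnerProductSpace ℂ H] [CompleteSpace H]
    (ν : A →ₐ[ℂ] (H →L[ℂ] H)) (hν : ∀ a : A, ‖ν a‖ ≤ ‖a‖)
    {J : Type*} (gen : J → A) (hnorm : ∀ i, ‖gen i‖ = 1)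
    (hdense : Dense ((Algebra.adjoin ℂ (Set.range gen) : Subalgebra ℂ A) : Set A))
    (hisom : ∀ (i : J) (x : H), ‖ν (gen i) x‖ = ‖x‖) :
    ∀ (K : Type*) [NormedAddCommGroup K] [InnerProductSpace ℂ K] [CompleteSpace K]
      (ρ : A →ₐ[ℂ] (K →L[ℂ] K)), (∀ a : A, ‖ρ a‖ ≤ ‖a‖) →
      ∀ V : H →ₗᵢ[ℂ] K,
        (∀ a : A, ν a = (ContinuousLinearMap.adjoint V.toContinuousLinearMap).comp
          ((ρ a).comp V.toContinuousLinearMap)) →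
        ∀ (a : A) (x : H), V (ν a x) = ρ a (V x) := by
  intro K _ _ _ ρ hρ V hcomp a x
  have hν_cont : Continuous ν := AddMonoidHomClass.continuous_of_bound ν 1 (by simpa using hν)
  have hρ_cont : Continuous ρ := AddMonoidHomClass.continuous_of_bound ρ 1 (by simpa using hρ)
  have hgen : Set.range gen ⊆ intertwiningSubalgebra ν ρ V.toContinuousLinearMap := by
    rintro _ ⟨i, rfl⟩
    exact V.comp_eq_comp_of_isometric_compression (hcomp _) (hisom i) ((hρ _).trans (hnorm i).le)
  have ha : a ∈ intertwiningSubalgebra ν ρ V.toContinuousLinearMap := by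
    rw [intertwiningSubalgebra_eq_top hν_cont hρ_cont hdense hgen]
    trivial
  exact congr($ha x)
end
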